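/- arXiv:0905.4535 — 3 statements merged into one kernel-verified Lean document; each statement's English description precedes it below -/
import Mathlib

section
/- Let T be a bounded linear operator on a complex Hilbert space with σ(T) ∩ ∂𝔻 = ∅. Then T is not Li-Yorke chaotic. -/
/-!
Let `J n ρ = ∮_{|w|=ρ} wⁿ (w - T)⁻¹ dw` (`resolventMoment T n ρ`). Since `T` commutes with its
resolvent, `Tⁿ J 0 ρ = J n ρ` and `J (-(n+1)) ρ T^(n+1) = J 0 ρ - 2πi`; by Cauchy's theorem
`J 0 ρ` is the same for all `ρ` in an annulus around the unit circle free of spectrum.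
For `s > 1` the second identity bounds `‖(J 0 s - 2πi) x‖` by a constant times `‖T^(n+1) x‖`,
so if `0` is a cluster point of `‖Tⁿ x‖` then `J 0 s x = 2πi x`. For `r < 1` the first one then
gives `‖Tⁿ x‖ = O(rⁿ)`. Thus `liminf ‖Tⁿ (x - y)‖ = 0` forces `‖Tⁿ (x - y)‖ → 0`, which is
incompatible with a positive `limsup`.
-/

open Filter Topology

/-- A pair `{x, y}` is a Li-Yorke chaotic pair for the operator `T`. -/
def LiYorkePair {E : Type*} [NormedAddCommGroup E] [NormedSpace ℂ E]
    (T : E →L[ℂ] E) (x y : E) : Prop :=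
  0 < Filter.limsup (fun n => ‖(T ^ n) x - (T ^ n) y‖) Filter.atTop ∧
    Filter.liminf (fun n => ‖(T ^ n) x - (T ^ n) y‖) Filter.atTop = 0

/-- `T` is Li-Yorke chaotic. -/
def LiYorkeChaotic {E : Type*} [NormedAddCommGroup E] [NormedSpace ℂ E]
    (T : E →L[ℂ] E) : Prop :=
  ∃ Γ : Set E, ¬Γ.Countable ∧ ∀ x ∈ Γ, ∀ y ∈ Γ, x ≠ y → LiYorkePair T x y

open Metric Complex Real

section Algebra

variable {R A : Type*} [CommRing R] [Ring A] [Algebra R A] {a : A} {r : R}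

theorem commute_resolvent (h : r ∈ resolventSet R a) : Commute a (resolvent a r) := by
  rw [spectrum.resolvent_eq h]
  exact ((Algebra.commute_algebraMap_right r a).sub_right (Commute.refl a)).units_inv_right

theorem mul_resolvent (h : r ∈ resolventSet R a) : a * resolvent a r = r • resolvent a r - 1 := by
  have h_inv := Ring.mul_inverse_cancel _ h
  rw [sub_mul, ← Algebra.smul_def] at h_inv
  rw [resolvent, ← h_inv, sub_sub_cancel]

end Algebra

section CircleIntegral

variable {E F : Type*} [NormedAddCommGroup E] [NormedSpace ℂ E]

theorem circleIntegrable_zpow_smul {ρ : ℝ} (hρ : 0 < ρ) (n : ℤ) {f : ℂ → E}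
    (hf : ContinuousOn f (sphere 0 ρ)) : CircleIntegrable (fun w => w ^ n • f w) 0 ρ := by
  refine ContinuousOn.circleIntegrable hρ.le (.smul (fun w hw => ?_) hf)
  exact (continuousAt_zpow₀ w n (.inl (ne_of_mem_sphere hw hρ.ne'))).continuousWithinAt

theorem circleIntegral_zpow_of_ne {n : ℤ} (hn : n ≠ -1) (ρ : ℝ) : (∮ w in C(0, ρ), w ^ n) = 0 := by
  simpa using circleIntegral.integral_sub_zpow_of_ne hn 0 0 ρ

theorem circleIntegral_zpow_neg_one {ρ : ℝ} (hρ : 0 < ρ) :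
    (∮ w in C(0, ρ), w ^ (-1 : ℤ)) = 2 * π * I := by
  simpa using circleIntegral.integral_sub_inv_of_mem_ball (mem_ball_self (x := (0 : ℂ)) hρ)

variable [CompleteSpace E] [NormedAddCommGroup F] [NormedSpace ℂ F] [CompleteSpace F]

theorem ContinuousLinearMap.circleIntegral_comp_comm (L : E →L[ℂ] F) {f : ℂ → E} {c : ℂ}
    {R : ℝ} (hf : CircleIntegrable f c R) :
    (∮ z in C(c, R), L (f z)) = L (∮ z in C(c, R), f z) := by
  simp only [circleIntegral, ← map_smul]
  exact L.intervalIntegral_comp_comm hf.out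

variable {A : Type*} [NormedRing A] [NormedAlgebra ℂ A] [CompleteSpace A]

theorem circleIntegral_const_mul (x : A) {f : ℂ → A} {c : ℂ} {R : ℝ}
    (hf : CircleIntegrable f c R) : (∮ z in C(c, R), x * f z) = x * ∮ z in C(c, R), f z :=
  (ContinuousLinearMap.mul ℂ A x).circleIntegral_comp_comm hf

theorem circleIntegral_mul_const (x : A) {f : ℂ → A} {c : ℂ} {R : ℝ}
    (hf : CircleIntegrable f c R) : (∮ z in C(c, R), f z * x) = (∮ z in C(c, R), f z) * x :=
  ((ContinuousLinearMap.mul ℂ A).flip x).circleIntegral_comp_comm hf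

end CircleIntegral

section ResolventMoment

variable {A : Type*} [NormedRing A] [NormedAlgebra ℂ A] {a : A} {ρ : ℝ}

/-- `resolventMoment a 0 ρ` is `2πi` times the Riesz projection of `a` onto the part of its
spectrum inside the circle of radius `ρ`. -/
noncomputable def resolventMoment (a : A) (n : ℤ) (ρ : ℝ) : A :=
  ∮ w in C(0, ρ), w ^ n • resolvent a w

theorem norm_resolventMoment_le {M : ℝ} (hρ : 0 ≤ ρ)
    (hM : ∀ w ∈ sphere (0 : ℂ) ρ, ‖resolvent a w‖ ≤ M) (n : ℤ) :
    ‖resolventMoment a n ρ‖ ≤ 2 * π * ρ * (ρ ^ n * M) := by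
  refine circleIntegral.norm_integral_le_of_norm_le_const hρ fun w hw => ?_
  rw [norm_smul, norm_zpow, mem_sphere_zero_iff_norm.1 hw]
  exact mul_le_mul_of_nonneg_left (hM w hw) (zpow_nonneg hρ n)

variable [CompleteSpace A]

theorem continuousOn_resolvent (a : A) : ContinuousOn (resolvent a) (resolventSet ℂ a) :=
  fun _ hw => (spectrum.hasDerivAt_resolvent_const_left hw).continuousAt.continuousWithinAt

theorem circleIntegrable_zpow_smul_resolvent (hρ : 0 < ρ) (ha : sphere 0 ρ ⊆ resolventSet ℂ a)
    (n : ℤ) : CircleIntegrable (fun w => w ^ n • resolvent a w) 0 ρ :=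
  circleIntegrable_zpow_smul hρ n ((continuousOn_resolvent a).mono ha)

theorem commute_resolventMoment (hρ : 0 < ρ) (ha : sphere 0 ρ ⊆ resolventSet ℂ a) (n : ℤ) :
    Commute a (resolventMoment a n ρ) := by
  have hint := circleIntegrable_zpow_smul_resolvent hρ ha n
  rw [Commute, SemiconjBy, resolventMoment, ← circleIntegral_const_mul a hint,
    ← circleIntegral_mul_const a hint]
  refine circleIntegral.integral_congr hρ.le fun w hw => ?_
  simp only [mul_smul_comm, smul_mul_assoc, (commute_resolvent (ha hw)).eq]

theorem mul_resolventMoment (hρ : 0 < ρ) (ha : sphere 0 ρ ⊆ resolventSet ℂ a) (n : ℤ) :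
    a * resolventMoment a n ρ =
      resolventMoment a (n + 1) ρ - (∮ w in C(0, ρ), w ^ n) • (1 : A) := by
  have hint := circleIntegrable_zpow_smul_resolvent hρ ha n
  rw [resolventMoment, ← circleIntegral_const_mul a hint, ← circleIntegral.integral_smul_const,
    resolventMoment, ← circleIntegral.integral_sub (circleIntegrable_zpow_smul_resolvent hρ ha _)
    (circleIntegrable_zpow_smul hρ n continuousOn_const)]
  refine circleIntegral.integral_congr hρ.le fun w hw => ?_
  simp only [mul_smul_comm, mul_resolvent (ha hw), smul_sub, smul_smul,
    ← zpow_add_one₀ (ne_of_mem_sphere hw hρ.ne')]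

theorem resolventMoment_mul (hρ : 0 < ρ) (ha : sphere 0 ρ ⊆ resolventSet ℂ a) (n : ℤ) :
    resolventMoment a n ρ * a =
      resolventMoment a (n + 1) ρ - (∮ w in C(0, ρ), w ^ n) • (1 : A) :=
  (commute_resolventMoment hρ ha n).eq.symm.trans (mul_resolventMoment hρ ha n)

theorem pow_mul_resolventMoment_zero (hρ : 0 < ρ) (ha : sphere 0 ρ ⊆ resolventSet ℂ a) (n : ℕ) :
    a ^ n * resolventMoment a 0 ρ = resolventMoment a n ρ := by
  induction n with
  | zero => simp
  | succ m ih =>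
    rw [pow_succ', mul_assoc, ih, mul_resolventMoment hρ ha,
      circleIntegral_zpow_of_ne (by omega), zero_smul, sub_zero, Nat.cast_succ]

theorem resolventMoment_neg_mul_pow (hρ : 0 < ρ) (ha : sphere 0 ρ ⊆ resolventSet ℂ a) (n : ℕ) :
    resolventMoment a (-(n + 1)) ρ * a ^ (n + 1) =
      resolventMoment a 0 ρ - (2 * π * I) • (1 : A) := by
  induction n with
  | zero =>
    rw [Nat.cast_zero, zero_add, pow_one, resolventMoment_mul hρ ha, neg_add_cancel,
      circleIntegral_zpow_neg_one hρ]
  | succ m ih =>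
    rw [pow_succ', ← mul_assoc, resolventMoment_mul hρ ha, circleIntegral_zpow_of_ne (by omega),
      zero_smul, sub_zero, ← ih]
    push_cast
    ring_nf

theorem resolventMoment_zero_eq_of_annulus {r s : ℝ} (hr : 0 < r) (hrs : r ≤ s)
    (ha : closedBall 0 s \ ball 0 r ⊆ resolventSet ℂ a) :
    resolventMoment a 0 s = resolventMoment a 0 r := by
  simp only [resolventMoment, zpow_zero, one_smul]
  refine circleIntegral_eq_of_differentiable_on_annulus_off_countable hr hrs Set.countable_empty
    ((continuousOn_resolvent a).mono ha) fun w ⟨⟨hws, hwr⟩, _⟩ => ?_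
  exact (spectrum.hasDerivAt_resolvent_const_left
    (ha ⟨ball_subset_closedBall hws, fun h => hwr (ball_subset_closedBall h)⟩)).differentiableAt

end ResolventMoment

theorem exists_annulus_subset_resolventSet {A : Type*} [NormedRing A] [NormedAlgebra ℂ A]
    [CompleteSpace A] {a : A} (ha : ∀ z ∈ spectrum ℂ a, ‖z‖ ≠ 1) :
    ∃ r s : ℝ, 0 < r ∧ r < 1 ∧ 1 < s ∧ closedBall (0 : ℂ) s \ ball 0 r ⊆ resolventSet ℂ a := by
  obtain ⟨ε, hε, hball⟩ := Metric.isOpen_iff.1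
    ((spectrum.isCompact a).image continuous_norm).isClosed.isOpen_compl 1
    fun ⟨z, hz, hz1⟩ => ha z hz hz1
  refine ⟨max (1 / 2) (1 - ε / 2), 1 + ε / 2, by positivity, max_lt (by norm_num) (by linarith),
    by linarith, fun w ⟨hws, hwr⟩ => spectrum.notMem_iff.1 fun hw => hball ?_ ⟨w, hw, rfl⟩⟩
  rw [mem_closedBall_zero_iff] at hws
  rw [mem_ball_zero_iff, not_lt, max_le_iff] at hwr
  rw [mem_ball, Real.dist_eq, abs_sub_lt_iff]
  constructor <;> linarith

section Operator

variable {E : Type*} [NormedAddCommGroup E] [NormedSpace ℂ E] [CompleteSpace E] {T : E →L[ℂ] E}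

theorem resolventMoment_zero_apply_of_mapClusterPt {s : ℝ} (hs : 1 ≤ s)
    (hT : sphere 0 s ⊆ resolventSet ℂ T) {x : E}
    (hx : MapClusterPt (0 : ℝ) atTop fun n => ‖(T ^ n) x‖) :
    resolventMoment T 0 s x = (2 * π * I) • x := by
  have hs0 : 0 < s := by linarith
  obtain ⟨M, hM⟩ := (isCompact_sphere (0 : ℂ) s).exists_bound_of_continuousOn
    ((continuousOn_resolvent T).mono hT)
  have hM0 : 0 ≤ M := (norm_nonneg _).trans (hM s (by simp [hs0.le]))
  set d := resolventMoment T 0 s x - (2 * π * I) • x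
  have hd : ∀ n : ℕ, ‖d‖ ≤ 2 * π * s * M * ‖(T ^ (n + 1)) x‖ := fun n =>
    calc ‖d‖ = ‖resolventMoment T (-(n + 1)) s ((T ^ (n + 1)) x)‖ := by
          rw [← mul_apply_eq_comp, resolventMoment_neg_mul_pow hs0 hT]
          simp [d]
      _ ≤ ‖resolventMoment T (-(n + 1)) s‖ * ‖(T ^ (n + 1)) x‖ := ContinuousLinearMap.le_opNorm _ _
      _ ≤ 2 * π * s * (1 * M) * ‖(T ^ (n + 1)) x‖ := by
          gcongr
          refine (norm_resolventMoment_le hs0.le hM _).trans ?_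
          gcongr
          exact zpow_le_one_of_nonpos₀ hs (by omega)
      _ = 2 * π * s * M * ‖(T ^ (n + 1)) x‖ := by rw [one_mul]
  have hd0 : ‖d‖ ≤ 2 * π * s * M * 0 := by
    refine (isClosed_le continuous_const (continuous_const.mul continuous_id)).mem_of_mapClusterPt
      hx (eventually_atTop.2 ⟨1, fun n hn => ?_⟩)
    obtain ⟨m, rfl⟩ := Nat.exists_eq_add_of_le' hn
    exact hd m
  rwa [mul_zero, norm_le_zero_iff, sub_eq_zero] at hd0

theorem tendsto_norm_pow_apply_of_resolventMoment_zero_apply {r : ℝ} (hr0 : 0 < r) (hr1 : r < 1)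
    (hT : sphere 0 r ⊆ resolventSet ℂ T) {x : E}
    (hx : resolventMoment T 0 r x = (2 * π * I) • x) :
    Tendsto (fun n => ‖(T ^ n) x‖) atTop (𝓝 0) := by
  obtain ⟨M, hM⟩ := (isCompact_sphere (0 : ℂ) r).exists_bound_of_continuousOn
    ((continuousOn_resolvent T).mono hT)
  have hbound : ∀ n : ℕ, ‖(T ^ n) x‖ ≤ r ^ n * (r * M * ‖x‖) := fun n => by
    have : 2 * π * ‖(T ^ n) x‖ ≤ 2 * π * (r ^ n * (r * M * ‖x‖)) :=
      calc 2 * π * ‖(T ^ n) x‖ = ‖(T ^ n) ((2 * π * I) • x)‖ := by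
            rw [map_smul, norm_smul]
            simp [abs_of_pos pi_pos]
        _ = ‖resolventMoment T n r x‖ := by
            rw [← hx, ← mul_apply_eq_comp, pow_mul_resolventMoment_zero hr0 hT]
        _ ≤ ‖resolventMoment T n r‖ * ‖x‖ := ContinuousLinearMap.le_opNorm _ _
        _ ≤ 2 * π * r * (r ^ (n : ℤ) * M) * ‖x‖ := by
            gcongr
            exact norm_resolventMoment_le hr0.le hM _
        _ = 2 * π * (r ^ n * (r * M * ‖x‖)) := by rw [zpow_natCast]; ring
    exact le_of_mul_le_mul_left this (by positivity)
  refine squeeze_zero (fun n => norm_nonneg _) hbound ?_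
  simpa using (tendsto_pow_atTop_nhds_zero_of_lt_one hr0.le hr1).mul_const (r * M * ‖x‖)

theorem tendsto_norm_pow_apply_of_mapClusterPt (hT : ∀ z ∈ spectrum ℂ T, ‖z‖ ≠ 1) {x : E}
    (hx : MapClusterPt (0 : ℝ) atTop fun n => ‖(T ^ n) x‖) :
    Tendsto (fun n => ‖(T ^ n) x‖) atTop (𝓝 0) := by
  obtain ⟨r, s, hr0, hr1, hs1, hann⟩ := exists_annulus_subset_resolventSet hT
  have hsphere {ρ : ℝ} (hrρ : r ≤ ρ) (hρs : ρ ≤ s) : sphere 0 ρ ⊆ resolventSet ℂ T :=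
    fun w hw => hann <| by
      simp only [Set.mem_sdiff, mem_closedBall_zero_iff, mem_ball_zero_iff,
        mem_sphere_zero_iff_norm.1 hw]
      exact ⟨hρs, not_lt.2 hrρ⟩
  refine tendsto_norm_pow_apply_of_resolventMoment_zero_apply hr0 hr1
    (hsphere le_rfl (by linarith)) ?_
  rw [← resolventMoment_zero_eq_of_annulus hr0 (by linarith) hann]
  exact resolventMoment_zero_apply_of_mapClusterPt hs1.le (hsphere (by linarith) le_rfl) hx

end Operator

theorem not_liYorkeChaotic_of_spectrum_disjoint_circle_general
    {H : Type*} [NormedAddCommGroup H] [InnerProductSpace ℂ H] [CompleteSpace H]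
    (T : H →L[ℂ] H)
    (hspec : spectrum ℂ T ∩ {z : ℂ | ‖z‖ = 1} = ∅) :
    ¬ LiYorkeChaotic T := by
  rintro ⟨Γ, hΓ, hpair⟩
  obtain ⟨x, hx, y, hy, hxy⟩ := Set.not_subsingleton_iff.1 (mt Set.Subsingleton.countable hΓ)
  obtain ⟨hsup, hinf⟩ := hpair x hx y hy hxy
  simp_rw [← map_sub] at hsup hinf
  have hbdd : IsBoundedUnder (· ≤ ·) atTop fun n => ‖(T ^ n) (x - y)‖ := by
    by_contra h
    exact hsup.ne' (Real.limsup_of_not_isBoundedUnder h)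
  have hcluster : MapClusterPt (0 : ℝ) atTop fun n => ‖(T ^ n) (x - y)‖ :=
    hinf ▸ MapClusterPt.liminf hbdd.isCoboundedUnder_ge
      (isBoundedUnder_of_eventually_ge (.of_forall fun _ => norm_nonneg _))
  have hT : ∀ z ∈ spectrum ℂ T, ‖z‖ ≠ 1 := fun z hz h1 =>
    Set.eq_empty_iff_forall_notMem.1 hspec z ⟨hz, h1⟩
  exact hsup.ne' (tendsto_norm_pow_apply_of_mapClusterPt hT hcluster).limsup_eq

theorem not_liYorkeChaotic_of_spectrum_disjoint_circle
    {H : Type*} [NormedAddCommGroup H] [InnerProductSpace ℂ H] [CompleteSpace H]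
    [TopologicalSpace.SeparableSpace H]
    (T : H →L[ℂ] H)
    (hspec : spectrum ℂ T ∩ {z : ℂ | ‖z‖ = 1} = ∅) :
    ¬ LiYorkeChaotic T :=
  not_liYorkeChaotic_of_spectrum_disjoint_circle_general T hspec
end

section
/- The weighted bilateral shift A on ℓ²(ℤ) defined by A e_i = (1/2) e_{i+1} for i ≤ −2 and A e_i = 2 e_{i+1} for i > −2 satisfies: for every nonzero x ∈ ℓ²(ℤ), ‖Aⁿx‖ → ∞ as n → ∞. In particular, A is not Li-Yorke chaotic and not distributionally chaotic. -/
open Filter Topology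

/-- `T` is distributionally chaotic. -/
def DistributionallyChaotic {E : Type*} [NormedAddCommGroup E] [NormedSpace ℂ E]
    (T : E →L[ℂ] E) : Prop :=
  ∃ ε > (0 : ℝ), ∃ Λ : Set E, ¬Λ.Countable ∧ ∀ x ∈ Λ, ∀ y ∈ Λ, x ≠ y →
    (∀ τ > (0 : ℝ), Filter.limsup
        (fun n : ℕ => (Set.ncard {i | i < n ∧ ‖(T ^ i) x - (T ^ i) y‖ < τ} : ℝ) / n)
        Filter.atTop = 1) ∧
      Filter.liminf
        (fun n : ℕ => (Set.ncard {i | i < n ∧ ‖(T ^ i) x - (T ^ i) y‖ < ε} : ℝ) / n)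
        Filter.atTop = 0

/-!
Writing `x = ∑ xᵢ eᵢ`, the `(j + n)`-th coordinate of `Aⁿ x` is `xⱼ` times the product of the
`n` weights `w(j), …, w(j + n - 1)`. Once the indices pass `-2` every further weight is `2`, so for
any coordinate `j` with `xⱼ ≠ 0` this product grows like `2ⁿ`, and `‖Aⁿ x‖ ≥ |(Aⁿ x)(j + n)| → ∞`.
Applied to `x - y`, any two distinct orbits drift apart, so they are `τ`-close only finitely
often; this rules out Li-Yorke pairs and distributionally scrambled pairs alike.
-/

open Finset
open scoped ENNReal

lemma tendsto_prod_range_atTop_of_le {f : ℕ → ℝ} (hf : ∀ m, 0 < f m) {c : ℝ} (hc : 1 < c)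
    {N : ℕ} (hN : ∀ m, N ≤ m → c ≤ f m) :
    Tendsto (fun n => ∏ m ∈ range n, f m) atTop atTop := by
  rw [← tendsto_add_atTop_iff_nat N]
  have hP : 0 < ∏ m ∈ range N, f m := prod_pos fun m _ => hf m
  have hbound : ∀ n, (∏ m ∈ range N, f m) * c ^ n ≤ ∏ m ∈ range (n + N), f m := by
    intro n
    rw [add_comm, prod_range_add]
    gcongr
    calc c ^ n = ∏ _m ∈ range n, c := by rw [prod_const, card_range]
      _ ≤ ∏ m ∈ range n, f (N + m) :=
        prod_le_prod (fun _ _ => by linarith) fun m _ => hN _ (Nat.le_add_right N m)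
  exact tendsto_atTop_mono hbound
    (Tendsto.const_mul_atTop hP (tendsto_pow_atTop_atTop_of_one_lt hc))

lemma tendsto_ncard_lt_div_atTop_zero {u : ℕ → ℝ} (hu : Tendsto u atTop atTop) (τ : ℝ) :
    Tendsto (fun n : ℕ => (Set.ncard {i | i < n ∧ u i < τ} : ℝ) / n) atTop (𝓝 0) := by
  obtain ⟨N, hN⟩ := (hu.eventually_ge_atTop τ).exists_forall_of_atTop
  have hcard : ∀ n, (Set.ncard {i | i < n ∧ u i < τ} : ℝ) ≤ N := by
    intro n
    have hsub : {i | i < n ∧ u i < τ} ⊆ Set.Iio N := fun i hi =>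
      lt_of_not_ge fun hiN => (hN i hiN).not_gt hi.2
    exact_mod_cast (Set.ncard_le_ncard hsub (Set.finite_Iio N)).trans_eq (Set.ncard_Iio_nat N)
  exact squeeze_zero (fun n => by positivity)
    (fun n => div_le_div_of_nonneg_right (hcard n) n.cast_nonneg)
    (tendsto_const_div_atTop_nhds_zero_nat (N : ℝ))

section DivergentOrbits

variable {E : Type*} [NormedAddCommGroup E] [NormedSpace ℂ E] {T : E →L[ℂ] E}

lemma tendsto_norm_pow_sub_pow (hT : ∀ x, x ≠ 0 → Tendsto (fun n => ‖(T ^ n) x‖) atTop atTop)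
    {x y : E} (hxy : x ≠ y) : Tendsto (fun n => ‖(T ^ n) x - (T ^ n) y‖) atTop atTop := by
  simpa only [map_sub] using hT (x - y) (sub_ne_zero.mpr hxy)

theorem not_liYorkeChaotic_of_tendsto_norm_pow
    (hT : ∀ x, x ≠ 0 → Tendsto (fun n => ‖(T ^ n) x‖) atTop atTop) : ¬ LiYorkeChaotic T := by
  rintro ⟨Γ, hΓ, hpair⟩
  obtain ⟨x, hx, y, hy, hxy⟩ := Set.not_subsingleton_iff.mp (mt Set.Subsingleton.countable hΓ)
  have hpos := (hpair x hx y hy hxy).1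
  -- a divergent sequence has no real limsup, and Mathlib's `limsup` then takes the junk value `0`
  rw [Real.limsup_of_not_isBoundedUnder
    (not_isBoundedUnder_of_tendsto_atTop (tendsto_norm_pow_sub_pow hT hxy))] at hpos
  exact hpos.false

theorem not_distributionallyChaotic_of_tendsto_norm_pow
    (hT : ∀ x, x ≠ 0 → Tendsto (fun n => ‖(T ^ n) x‖) atTop atTop) :
    ¬ DistributionallyChaotic T := by
  rintro ⟨ε, -, Λ, hΛ, hpair⟩
  obtain ⟨x, hx, y, hy, hxy⟩ := Set.not_subsingleton_iff.mp (mt Set.Subsingleton.countable hΛ)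
  have hone := (hpair x hx y hy hxy).1 1 one_pos
  rw [(tendsto_ncard_lt_div_atTop_zero (tendsto_norm_pow_sub_pow hT hxy) 1).limsup_eq] at hone
  exact zero_ne_one hone

end DivergentOrbits

section WeightedShift

variable {𝕜 : Type*} [NormedField 𝕜] {p : ℝ≥0∞} [Fact (1 ≤ p)]
  {A : lp (fun _ : ℤ => 𝕜) p →L[𝕜] lp (fun _ : ℤ => 𝕜) p} {w : ℤ → 𝕜}

lemma weightedShift_apply (hp : p ≠ ∞)
    (hA : ∀ i, A (lp.single p i (1 : 𝕜)) = w i • lp.single p (i + 1) (1 : 𝕜))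
    (x : lp (fun _ : ℤ => 𝕜) p) (k : ℤ) : A x k = w (k - 1) * x (k - 1) := by
  have hsum : HasSum (fun i => lp.evalCLM 𝕜 _ p k (A (lp.single p i (x i)))) (A x k) :=
    ((lp.hasSum_single hp x).mapL A).mapL (lp.evalCLM 𝕜 _ p k)
  have hterm : ∀ i, lp.evalCLM 𝕜 _ p k (A (lp.single p i (x i)))
      = if i = k - 1 then w (k - 1) * x (k - 1) else 0 := by
    intro i
    have hsingle : lp.single p i (x i) = (x i • lp.single p i (1 : 𝕜) : lp (fun _ : ℤ => 𝕜) p) := by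
      rw [← lp.single_smul, smul_eq_mul, mul_one]
    change A (lp.single p i (x i)) k = _
    rw [hsingle, map_smul, hA, smul_smul, lp.coeFn_smul, Pi.smul_apply, smul_eq_mul]
    split_ifs with hi
    · subst hi
      rw [sub_add_cancel, lp.single_apply_self]
      ring
    · rw [lp.single_apply_ne p (i + 1) _ (by omega), mul_zero]
  rw [funext hterm] at hsum
  exact hsum.unique (hasSum_ite_eq (k - 1) _)

lemma weightedShift_pow_apply (hp : p ≠ ∞)
    (hA : ∀ i, A (lp.single p i (1 : 𝕜)) = w i • lp.single p (i + 1) (1 : 𝕜))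
    (x : lp (fun _ : ℤ => 𝕜) p) (j : ℤ) (n : ℕ) :
    (A ^ n) x (j + n) = (∏ m ∈ range n, w (j + m)) * x j := by
  induction n with
  | zero => simp
  | succ n ih =>
    rw [pow_succ', mul_apply_eq_comp, weightedShift_apply hp hA, Nat.cast_succ,
      ← add_assoc, add_sub_cancel_right, ih, prod_range_succ]
    ring

lemma tendsto_norm_weightedShift_pow (hp : p ≠ ∞)
    (hA : ∀ i, A (lp.single p i (1 : 𝕜)) = w i • lp.single p (i + 1) (1 : 𝕜))
    (hw : ∀ j, Tendsto (fun n => ∏ m ∈ range n, ‖w (j + m)‖) atTop atTop)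
    {x : lp (fun _ : ℤ => 𝕜) p} (hx : x ≠ 0) :
    Tendsto (fun n => ‖(A ^ n) x‖) atTop atTop := by
  obtain ⟨j, hj⟩ : ∃ j, x j ≠ 0 := by
    by_contra! h
    exact hx (lp.ext (funext h))
  have hbound : ∀ n, (∏ m ∈ range n, ‖w (j + m)‖) * ‖x j‖ ≤ ‖(A ^ n) x‖ := fun n => by
    simpa only [weightedShift_pow_apply hp hA, norm_mul, norm_prod] using
      lp.norm_apply_le_norm (zero_lt_one.trans_le Fact.out).ne' ((A ^ n) x) (j + n)
  exact tendsto_atTop_mono hbound ((hw j).atTop_mul_const (norm_pos_iff.mpr hj))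

end WeightedShift

noncomputable def bilateralShiftWeight (i : ℤ) : ℂ := if i ≤ -2 then 1 / 2 else 2

lemma tendsto_prod_norm_bilateralShiftWeight (j : ℤ) :
    Tendsto (fun n => ∏ m ∈ range n, ‖bilateralShiftWeight (j + m)‖) atTop atTop := by
  refine tendsto_prod_range_atTop_of_le (fun m => ?_) one_lt_two (N := (-1 - j).toNat)
    fun m hm => ?_
  · unfold bilateralShiftWeight
    split_ifs <;> norm_num
  · rw [bilateralShiftWeight, if_neg (by omega)]
    norm_num

theorem bilateral_shift_orbits_tendsto_atTop
    (A : lp (fun _ : ℤ => ℂ) 2 →L[ℂ] lp (fun _ : ℤ => ℂ) 2)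
    (hA₁ : ∀ i : ℤ, i ≤ -2 →
      A (lp.single 2 i (1 : ℂ)) = ((1 : ℂ) / 2) • lp.single 2 (i + 1) (1 : ℂ))
    (hA₂ : ∀ i : ℤ, -2 < i →
      A (lp.single 2 i (1 : ℂ)) = (2 : ℂ) • lp.single 2 (i + 1) (1 : ℂ)) :
    (∀ x : lp (fun _ : ℤ => ℂ) 2, x ≠ 0 →
        Tendsto (fun n => ‖(A ^ n) x‖) atTop atTop) ∧
      ¬ LiYorkeChaotic A ∧ ¬ DistributionallyChaotic A := by
  have hA : ∀ i, A (lp.single 2 i 1) = bilateralShiftWeight i • lp.single 2 (i + 1) 1 := by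
    intro i
    unfold bilateralShiftWeight
    split_ifs with hi
    · exact hA₁ i hi
    · exact hA₂ i (by omega)
  have horbit : ∀ x : lp (fun _ : ℤ => ℂ) 2, x ≠ 0 →
      Tendsto (fun n => ‖(A ^ n) x‖) atTop atTop := fun _ hx =>
    tendsto_norm_weightedShift_pow ENNReal.ofNat_ne_top hA
      tendsto_prod_norm_bilateralShiftWeight hx
  exact ⟨horbit, not_liYorkeChaotic_of_tendsto_norm_pow horbit,
    not_distributionallyChaotic_of_tendsto_norm_pow horbit⟩
end

section
/- Let A be the weighted bilateral shift on ℓ²(ℤ) given by A e_i = 2 e_{i−1} for i ≥ 1, A e_0 = e_{−1}, and A e_i = (|i|/(|i|+1)) e_{i−1} for i ≤ −1. Then A is norm-unimodal: for every m ∈ ℕ, ‖Aⁱ e_m‖ ≥ 2ⁱ for 1 ≤ i ≤ m and lim_{n→∞} ‖Aⁿ e_m‖ = 0. -/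
open Filter Topology

/-! The orbit of `e_m` first runs down the positive half-line with weight `2`, gaining
`2^m` by the time it reaches `e_0`; from `e_{-1}` on, the weights `k/(k+1)` telescope, so
`A^{m+1+k} e_m = (2^m/(k+1)) e_{-1-k}`, whose norm tends to `0`. -/

section WeightedShift

variable {𝕜 E : Type*} [TopologicalSpace E] [AddCommGroup E]

theorem pow_apply_eq_pow_smul_of_const_weight [Semiring 𝕜] [Module 𝕜 E] (A : E →L[𝕜] E)
    (e : ℤ → E) {a : ℤ} {c : 𝕜}
    (hA : ∀ i, a < i → A (e i) = c • e (i - 1)) (n : ℕ) (m : ℤ) (hnm : a + n ≤ m) :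
    (A ^ n) (e m) = c ^ n • e (m - n) := by
  induction n with
  | zero => simp
  | succ n ih =>
    rw [pow_succ', mul_apply_eq_comp, ih (by omega), map_smul, hA _ (by omega),
      smul_smul, ← pow_succ]
    congr 2
    push_cast
    ring

theorem pow_apply_neg_one_eq_inv_smul_of_harmonic_weight [Field 𝕜] [CharZero 𝕜] [Module 𝕜 E]
    (A : E →L[𝕜] E) (e : ℤ → E)
    (hA : ∀ i : ℤ, i ≤ -1 →
      A (e i) = ((i.natAbs : 𝕜) / ((i.natAbs : 𝕜) + 1)) • e (i - 1)) (k : ℕ) :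
    (A ^ k) (e (-1)) = ((k : 𝕜) + 1)⁻¹ • e (-1 - k) := by
  induction k with
  | zero => simp
  | succ k ih =>
    have hk : (-1 - k : ℤ).natAbs = k + 1 := by omega
    rw [pow_succ', mul_apply_eq_comp, ih, map_smul, hA _ (by omega), hk, smul_smul]
    congr 1
    · field_simp
      push_cast
      ring
    · congr 1
      push_cast
      ring

end WeightedShift

theorem weighted_bilateral_shift_norm_unimodal
    (A : lp (fun _ : ℤ => ℂ) 2 →L[ℂ] lp (fun _ : ℤ => ℂ) 2)
    (hAp : ∀ i : ℤ, 1 ≤ i →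
      A (lp.single 2 i (1 : ℂ)) = (2 : ℂ) • lp.single 2 (i - 1) (1 : ℂ))
    (hA₀ : A (lp.single 2 (0 : ℤ) (1 : ℂ)) = lp.single 2 (-1 : ℤ) (1 : ℂ))
    (hAn : ∀ i : ℤ, i ≤ -1 →
      A (lp.single 2 i (1 : ℂ)) =
        ((i.natAbs : ℂ) / ((i.natAbs : ℂ) + 1)) • lp.single 2 (i - 1) (1 : ℂ)) :
    ∀ m : ℕ,
      (∀ i : ℕ, 1 ≤ i → i ≤ m →
        (2 : ℝ) ^ i ≤ ‖(A ^ i) (lp.single 2 (m : ℤ) (1 : ℂ))‖) ∧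
      Tendsto (fun n => ‖(A ^ n) (lp.single 2 (m : ℤ) (1 : ℂ))‖) atTop (𝓝 0) := by
  have hnorm (j : ℤ) : ‖lp.single (E := fun _ : ℤ => ℂ) 2 j (1 : ℂ)‖ = 1 :=
    (lp.norm_single two_pos j 1).trans norm_one
  intro m
  have hup (i : ℕ) (him : i ≤ m) :
      (A ^ i) (lp.single 2 (m : ℤ) (1 : ℂ)) = (2 : ℂ) ^ i • lp.single 2 (m - i : ℤ) (1 : ℂ) :=
    pow_apply_eq_pow_smul_of_const_weight A _ (a := 0) hAp i m (by omega)
  have hdown (k : ℕ) : ‖(A ^ (k + (m + 1))) (lp.single 2 (m : ℤ) (1 : ℂ))‖ =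
      2 ^ m * ((k : ℝ) + 1)⁻¹ := by
    rw [pow_add, pow_succ', mul_apply_eq_comp, mul_apply_eq_comp,
      hup m le_rfl, sub_self, map_smul, hA₀, map_smul,
      pow_apply_neg_one_eq_inv_smul_of_harmonic_weight A _ hAn k, norm_smul, norm_smul, hnorm,
      norm_inv, ← Nat.cast_add_one, Complex.norm_natCast]
    simp
  refine ⟨fun i _ him => by simp [hup i him, norm_smul, hnorm], ?_⟩
  refine (tendsto_add_atTop_iff_nat (m + 1)).1 ?_
  simp_rw [hdown]
  simpa using (tendsto_one_div_add_atTop_nhds_zero_nat (𝕜 := ℝ)).const_mul ((2 : ℝ) ^ m)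
end
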